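/- arXiv:1101.5940 — 2 statements merged into one kernel-verified Lean document; each statement's English description precedes it below -/
import Mathlib

section
/- Let s be the k-th avalanche of KSPM(D) and suppose there is a column l with all of l,…,l+D−2 fired in s. If p_i = s_t is a peak with p_i ≥ l+D−1 and p_{i−1} is the previous peak, then the avalanche continues for at least p_i − p_{i−1} − 1 further steps, and for every t' with t < t' ≤ t + p_i − p_{i−1} − 1, s_{t'} = s_{t'−1} − 1 (the columns strictly between the two peaks are fired in decreasing order immediately after p_i). -/
/-!
Since `τ` is stable, a legal strategy from `τ^{↓0}` fires every column at most once: firing `c`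
costs `D` grains, while `c` gains at most `D - 1` from `c + 1` and `1` from its source
`c + 1 - D`. Since firings commute, the leftmost strategy always fires the leftmost fireable
column. A peak `q` fires while everything fired before lies at or left of the previous peak `p`,
so `q` was made fireable by its source and `q ≤ p + D - 1`.

Right after `q` fires, each column `j` in `(p, q)` has received `D - 1` grains from `j + 1`. It
already holds the missing grain, unless it is empty and its source has not fired yet; in that
case nothing at or left of `j` could ever fire again, contradicting the fact, proved by
induction over the peaks, that all columns from `l` up to the current maximum fire. Hence `j`,
now the leftmost fireable column, fires next, and the avalanche descends from `q` to `p + 1`.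
-/

/-- Effect of firing column `i` in KSPM(D), on height-difference configurations. -/
def step (D : ℕ) (σ : ℕ → ℕ) (i : ℕ) : ℕ → ℕ :=
  fun j =>
    if j = i then σ i - D
    else if j + 1 = i then σ j + (D - 1)
    else if j = i + D - 1 then σ j + 1
    else σ j

/-- Transition on column `i`: `σ →ᵢ σ'`. -/
def KTrans (D : ℕ) (σ : ℕ → ℕ) (i : ℕ) (σ' : ℕ → ℕ) : Prop :=
  D ≤ σ i ∧ σ' = step D σ i

/-- A strategy (list of fired columns) is legal from `σ`. -/
def Legal (D : ℕ) : (ℕ → ℕ) → List ℕ → Prop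
  | _, [] => True
  | σ, i :: s => D ≤ σ i ∧ Legal D (step D σ i) s

/-- Configuration obtained by applying a strategy. -/
def applyStrat (D : ℕ) : (ℕ → ℕ) → List ℕ → (ℕ → ℕ)
  | σ, [] => σ
  | σ, i :: s => applyStrat D (step D σ i) s

/-- Reachability `σ →* σ'`. -/
def Reaches (D : ℕ) (σ σ' : ℕ → ℕ) : Prop :=
  ∃ s : List ℕ, Legal D σ s ∧ applyStrat D σ s = σ'

/-- A configuration is stable (a fixed point) if no transition is possible. -/
def Stable (D : ℕ) (σ : ℕ → ℕ) : Prop := ∀ i, σ i < D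

/-- Initial configuration: `N` grains stacked on column 0 (height differences `(N,0,0,…)`). -/
def initConf (N : ℕ) : ℕ → ℕ := fun j => if j = 0 then N else 0

/-- `τ = π(N)`: the stable configuration reachable from `N` stacked grains. -/
def IsPi (D N : ℕ) (τ : ℕ → ℕ) : Prop := Reaches D (initConf N) τ ∧ Stable D τ

/-- `σ^{↓0}`: add one grain on column 0. -/
def addGrain (σ : ℕ → ℕ) : ℕ → ℕ := Function.update σ 0 (σ 0 + 1)

/-- `s` is the leftmost (lexicographically minimal) strategy from `τ^{↓0}` to `τ'`. -/
def IsAvalancheFor (D : ℕ) (τ τ' : ℕ → ℕ) (s : List ℕ) : Prop :=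
  Legal D (addGrain τ) s ∧ applyStrat D (addGrain τ) s = τ' ∧
    ∀ s' : List ℕ, Legal D (addGrain τ) s' → applyStrat D (addGrain τ) s' = τ' →
      ¬ List.Lex (· < ·) s' s

/-- `s` is the `k`-th avalanche: leftmost strategy from `π(k-1)^{↓0}` to `π(k)`. -/
def IsAvalanche (D k : ℕ) (s : List ℕ) : Prop :=
  ∃ τ τ' : ℕ → ℕ, IsPi D (k - 1) τ ∧ IsPi D k τ' ∧ IsAvalancheFor D τ τ' s

/-- Position `t` (0-indexed) of strategy `s` is a peak: it exceeds all earlier fired columns. -/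
def IsPeak (s : List ℕ) (t : ℕ) : Prop :=
  t < s.length ∧ ∀ t' < t, s.getD t' 0 < s.getD t 0

/-- Column `p` is a peak of `s`. -/
def IsPeakVal (s : List ℕ) (p : ℕ) : Prop :=
  ∃ t : ℕ, IsPeak s t ∧ s.getD t 0 = p

section

variable {D : ℕ}

theorem applyStrat_append (σ : ℕ → ℕ) (a b : List ℕ) :
    applyStrat D σ (a ++ b) = applyStrat D (applyStrat D σ a) b := by
  induction a generalizing σ with
  | nil => rfl
  | cons x xs ih => exact ih _

theorem legal_append (σ : ℕ → ℕ) (a b : List ℕ) :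
    Legal D σ (a ++ b) ↔ Legal D σ a ∧ Legal D (applyStrat D σ a) b := by
  induction a generalizing σ with
  | nil => simp [Legal, applyStrat]
  | cons x xs ih => simp [Legal, applyStrat, ih, and_assoc]

theorem legal_append_singleton (σ : ℕ → ℕ) (l : List ℕ) (x : ℕ) :
    Legal D σ (l ++ [x]) ↔ Legal D σ l ∧ D ≤ applyStrat D σ l x := by
  simp [legal_append, Legal]

theorem applyStrat_append_singleton (σ : ℕ → ℕ) (l : List ℕ) (x : ℕ) :
    applyStrat D σ (l ++ [x]) = step D (applyStrat D σ l) x := by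
  simp [applyStrat_append, applyStrat]

theorem le_step_of_ne (σ : ℕ → ℕ) {i c : ℕ} (h : c ≠ i) : σ c ≤ step D σ i c := by
  unfold step
  split_ifs <;> omega

theorem step_of_lt (σ : ℕ → ℕ) {i c : ℕ} (h : c + 1 < i) : step D σ i c = σ c := by
  unfold step
  split_ifs <;> omega

theorem step_comm (hD : 1 ≤ D) {σ : ℕ → ℕ} {i j : ℕ} (hi : D ≤ σ i) (hj : D ≤ σ j) :
    step D (step D σ i) j = step D (step D σ j) i := by
  rcases eq_or_ne i j with rfl | hij
  · rfl
  funext c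
  by_cases hci : c = i
  · subst hci; simp only [step]; split_ifs <;> omega
  by_cases hcj : c = j
  · subst hcj; simp only [step]; split_ifs <;> omega
  simp only [step]
  split_ifs <;> omega

theorem step_add_ite (hD : 2 ≤ D) {σ : ℕ → ℕ} {x : ℕ} (hx : D ≤ σ x) (c : ℕ) :
    step D σ x c + (if x = c then D else 0)
      = σ c + (if x = c + 1 then D - 1 else 0) + (if x + D - 1 = c then 1 else 0) := by
  by_cases hxc : x = c
  · subst hxc; simp only [step]; split_ifs <;> omega
  simp only [step]
  split_ifs <;> omega

theorem applyStrat_add_mul_count (hD : 2 ≤ D) {σ : ℕ → ℕ} {l : List ℕ} (hl : Legal D σ l)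
    (c : ℕ) :
    applyStrat D σ l c + D * l.count c
      = σ c + (D - 1) * l.count (c + 1) + l.countP (· + D - 1 = c) := by
  induction l generalizing σ with
  | nil => simp [applyStrat]
  | cons x xs ih =>
    have hstep := step_add_ite hD hl.1 c
    have ih := ih hl.2
    simp only [applyStrat, List.count_cons, List.countP_cons, beq_iff_eq, decide_eq_true_eq]
      at ih ⊢
    split_ifs at hstep ⊢ <;> simp only [Nat.mul_add, Nat.mul_one, Nat.mul_zero] <;> omega

/-- The route must fire `c` at some point, as it ends stable, and firings of distinct columns
commute and never disable one another. -/
theorem exists_legal_cons_of_stable (hD : 1 ≤ D) {σ : ℕ → ℕ} {l : List ℕ} {c : ℕ}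
    (hl : Legal D σ l) (hc : D ≤ σ c) (hst : Stable D (applyStrat D σ l)) :
    ∃ l', Legal D σ (c :: l') ∧ applyStrat D σ (c :: l') = applyStrat D σ l := by
  induction l generalizing σ with
  | nil => exact absurd (hst c) (not_lt.2 hc)
  | cons a rest ih =>
    obtain ⟨ha, hrest⟩ := hl
    by_cases hac : a = c
    · subst hac
      exact ⟨rest, ⟨hc, hrest⟩, rfl⟩
    obtain ⟨l', ⟨hc', hl'⟩, happ⟩ := ih hrest (hc.trans (le_step_of_ne σ (Ne.symm hac))) hst
    have hcomm := step_comm hD hc ha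
    refine ⟨a :: l', ⟨hc, ha.trans (le_step_of_ne σ hac), ?_⟩, ?_⟩
    · simpa only [Legal, hcomm] using hl'
    · simpa only [applyStrat, hcomm] using happ

theorem addGrain_zero (τ : ℕ → ℕ) : addGrain τ 0 = τ 0 + 1 :=
  Function.update_self _ _ _

theorem addGrain_of_ne (τ : ℕ → ℕ) {c : ℕ} (hc : c ≠ 0) : addGrain τ c = τ c :=
  Function.update_of_ne hc _ _

theorem applyStrat_lt_of_mem_of_addGrain (hD : 2 ≤ D) {τ : ℕ → ℕ} (hτ : Stable D τ)
    {l : List ℕ} (hl : Legal D (addGrain τ) l) (hnd : l.Nodup) {c : ℕ} (hc : c ∈ l) :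
    applyStrat D (addGrain τ) l c < D := by
  have hval := applyStrat_add_mul_count hD hl c
  rw [List.count_eq_one_of_mem hnd hc] at hval
  have hsucc : (D - 1) * l.count (c + 1) ≤ D - 1 :=
    mul_le_of_le_one_right (Nat.zero_le _) (List.nodup_iff_count_le_one.1 hnd _)
  have hsrc : l.countP (· + D - 1 = c) ≤ l.count (c + 1 - D) := by
    rw [List.count_eq_countP]
    exact List.countP_mono_left fun x _ hx => by
      simp only [decide_eq_true_eq, beq_iff_eq] at hx ⊢
      omega
  have hsrc1 := List.nodup_iff_count_le_one.1 hnd (c + 1 - D)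
  rcases eq_or_ne c 0 with rfl | hc0
  · have hsrc0 : l.countP (· + D - 1 = 0) = 0 :=
      List.countP_eq_zero.2 fun x _ => by simp only [decide_eq_true_eq]; omega
    have := hτ 0
    rw [addGrain_zero] at hval
    omega
  · have := hτ c
    rw [addGrain_of_ne τ hc0] at hval
    omega

theorem Legal.nodup_of_addGrain (hD : 2 ≤ D) {τ : ℕ → ℕ} (hτ : Stable D τ) {l : List ℕ}
    (hl : Legal D (addGrain τ) l) : l.Nodup := by
  induction l using List.reverseRecOn with
  | nil => exact List.nodup_nil
  | append_singleton l x ih =>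
    obtain ⟨hlegal, hx⟩ := (legal_append_singleton _ l x).1 hl
    have hnd := ih hlegal
    refine List.nodup_append.2 ⟨hnd, List.nodup_singleton x, ?_⟩
    intro a ha b hb hab
    rw [List.mem_singleton] at hb
    rw [hab, hb] at ha
    exact absurd hx (not_le.2 (applyStrat_lt_of_mem_of_addGrain hD hτ hlegal hnd ha))

theorem exists_source_of_le_applyStrat (hD : 2 ≤ D) {σ : ℕ → ℕ} {l : List ℕ} (hl : Legal D σ l)
    {c : ℕ} (hσ : σ c < D) (hc : c ∉ l) (hc1 : c + 1 ∉ l) (hf : D ≤ applyStrat D σ l c) :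
    ∃ x ∈ l, x + D - 1 = c := by
  have hval := applyStrat_add_mul_count hD hl c
  rw [List.count_eq_zero.2 hc, List.count_eq_zero.2 hc1] at hval
  obtain ⟨x, hx, hxc⟩ := List.countP_pos_iff.1 (show 0 < l.countP (· + D - 1 = c) by omega)
  exact ⟨x, hx, of_decide_eq_true hxc⟩

theorem le_applyStrat_of_succ_mem (hD : 2 ≤ D) {σ : ℕ → ℕ} {l : List ℕ} (hl : Legal D σ l)
    {c : ℕ} (hc : c ∉ l) (hc1 : c + 1 ∈ l) (h : 0 < σ c ∨ ∃ x ∈ l, x + D - 1 = c) :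
    D ≤ applyStrat D σ l c := by
  have hval := applyStrat_add_mul_count hD hl c
  rw [List.count_eq_zero.2 hc] at hval
  have hsucc : D - 1 ≤ (D - 1) * l.count (c + 1) :=
    Nat.le_mul_of_pos_right _ (List.count_pos_iff.2 hc1)
  have hsrc : 0 < σ c + l.countP (· + D - 1 = c) := by
    rcases h with h | ⟨x, hx, hxc⟩
    · omega
    · have : 0 < l.countP (· + D - 1 = c) := List.countP_pos_iff.2 ⟨x, hx, by simpa using hxc⟩
      omega
  omega

theorem applyStrat_lt_of_forall_ne (hD : 2 ≤ D) {σ : ℕ → ℕ} {l : List ℕ} (hl : Legal D σ l)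
    (hnd : l.Nodup) {c : ℕ} (hσ : σ c = 0) (hsrc : ∀ x ∈ l, x + D - 1 ≠ c) :
    applyStrat D σ l c < D := by
  have hval := applyStrat_add_mul_count hD hl c
  rw [List.countP_eq_zero.2 fun x hx => by simpa using hsrc x hx] at hval
  have hsucc : (D - 1) * l.count (c + 1) ≤ D - 1 :=
    mul_le_of_le_one_right (Nat.zero_le _) (List.nodup_iff_count_le_one.1 hnd _)
  omega

theorem List.getD_mem_of_lt {s : List ℕ} {v : ℕ} (hv : v < s.length) : s.getD v 0 ∈ s := by
  rw [List.getD_eq_getElem s 0 hv]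
  exact List.getElem_mem hv

theorem List.take_succ_eq_getD {s : List ℕ} {v : ℕ} (hv : v < s.length) :
    s.take (v + 1) = s.take v ++ [s.getD v 0] := by
  rw [List.getD_eq_getElem s 0 hv, List.take_concat_get']

theorem List.mem_take_iff_getD {s : List ℕ} {u c : ℕ} :
    c ∈ s.take u ↔ ∃ z < u, z < s.length ∧ s.getD z 0 = c := by
  rw [List.mem_take_iff_getElem]
  constructor
  · rintro ⟨z, hz, rfl⟩
    exact ⟨z, by omega, by omega, List.getD_eq_getElem s 0 _⟩
  · rintro ⟨z, hzu, hzs, rfl⟩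
    exact ⟨z, by omega, (List.getD_eq_getElem s 0 hzs).symm⟩

theorem List.mem_iff_getD {s : List ℕ} {c : ℕ} : c ∈ s ↔ ∃ z < s.length, s.getD z 0 = c := by
  simpa using (List.mem_take_iff_getD (s := s) (u := s.length) (c := c))

theorem List.forall_mem_take_le {s : List ℕ} {u p : ℕ} (h : ∀ v < u, s.getD v 0 ≤ p) :
    ∀ x ∈ s.take u, x ≤ p := by
  intro x hx
  obtain ⟨z, hzu, -, rfl⟩ := List.mem_take_iff_getD.1 hx
  exact h z hzu

theorem applyStrat_take_eq_of_lt {σ : ℕ → ℕ} {s : List ℕ} {a b c : ℕ} (hab : a ≤ b)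
    (h : ∀ z, a ≤ z → z < b → c + 1 < s.getD z 0) :
    applyStrat D σ (s.take b) c = applyStrat D σ (s.take a) c := by
  induction b, hab using Nat.le_induction with
  | base => rfl
  | succ b hab ih =>
    rw [← ih fun z hz hzb => h z hz (by omega)]
    rcases lt_or_ge b s.length with hb | hb
    · rw [List.take_succ_eq_getD hb, applyStrat_append_singleton]
      exact step_of_lt _ (h b hab (by omega))
    · rw [List.take_of_length_le hb, List.take_of_length_le (by omega)]

theorem IsPeak.zero {s : List ℕ} (hs : 0 < s.length) : IsPeak s 0 :=
  ⟨hs, fun _ h => absurd h (Nat.not_lt_zero _)⟩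

theorem exists_last_isPeak_lt {s : List ℕ} {u : ℕ} (hu0 : 0 < u) (hu : u ≤ s.length) :
    ∃ ta < u, IsPeak s ta ∧ ∀ v, ta < v → v < u → ¬ IsPeak s v := by
  classical
  have hle := Nat.findGreatest_le (P := IsPeak s) (u - 1)
  exact ⟨Nat.findGreatest (IsPeak s) (u - 1), by omega,
    Nat.findGreatest_spec (Nat.zero_le _) (IsPeak.zero (by omega)),
    fun v hv hvu => Nat.findGreatest_is_greatest hv (by omega)⟩

theorem IsPeak.getD_le_of_forall_not_isPeak {s : List ℕ} {ta u : ℕ} (hta : IsPeak s ta)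
    (hu : u ≤ s.length) (hnext : ∀ v, ta < v → v < u → ¬ IsPeak s v) :
    ∀ v < u, s.getD v 0 ≤ s.getD ta 0 := by
  intro v
  induction v using Nat.strong_induction_on with
  | _ v ih =>
  intro hvu
  rcases lt_trichotomy v ta with hv | rfl | hv
  · exact (hta.2 v hv).le
  · exact le_rfl
  · have hnp := hnext v hv hvu
    simp only [IsPeak, not_and, not_forall, not_lt] at hnp
    obtain ⟨w, hwv, hw⟩ := hnp (by omega)
    exact hw.trans (ih w hwv (by omega))

namespace IsAvalancheFor

variable {τ τ' : ℕ → ℕ} {s : List ℕ}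

theorem legal_take (hav : IsAvalancheFor D τ τ' s) (v : ℕ) :
    Legal D (addGrain τ) (s.take v) :=
  ((legal_append _ _ _).1 ((List.take_append_drop v s).symm ▸ hav.1)).1

theorem legal_drop (hav : IsAvalancheFor D τ τ' s) (v : ℕ) :
    Legal D (applyStrat D (addGrain τ) (s.take v)) (s.drop v) ∧
      applyStrat D (applyStrat D (addGrain τ) (s.take v)) (s.drop v) = τ' := by
  rw [← applyStrat_append, List.take_append_drop]
  exact ⟨((legal_append _ _ _).1 ((List.take_append_drop v s).symm ▸ hav.1)).2, hav.2.1⟩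

theorem le_applyStrat_getD (hav : IsAvalancheFor D τ τ' s) {v : ℕ} (hv : v < s.length) :
    D ≤ applyStrat D (addGrain τ) (s.take v) (s.getD v 0) :=
  ((legal_append_singleton _ _ _).1 (List.take_succ_eq_getD hv ▸ hav.legal_take (v + 1))).2

theorem nodup (hD : 2 ≤ D) (hτ : Stable D τ) (hav : IsAvalancheFor D τ τ' s) : s.Nodup :=
  hav.1.nodup_of_addGrain hD hτ

theorem getD_zero (hτ : Stable D τ) (hav : IsAvalancheFor D τ τ' s) (hs : 0 < s.length) :
    s.getD 0 0 = 0 := by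
  by_contra h
  have := hav.le_applyStrat_getD hs
  rw [List.take_zero, applyStrat, addGrain_of_ne τ h] at this
  exact absurd (hτ _) (not_lt.2 this)

theorem lt_length_of_le_applyStrat (hτ' : Stable D τ') (hav : IsAvalancheFor D τ τ' s)
    {v c : ℕ} (hc : D ≤ applyStrat D (addGrain τ) (s.take v) c) : v < s.length := by
  by_contra h
  rw [List.take_of_length_le (not_lt.1 h), hav.2.1] at hc
  exact absurd (hτ' c) (not_lt.2 hc)

/-- Otherwise moving `c` to the front of the remaining strategy would give a lexicographically
smaller one. -/
theorem getD_le_of_le_applyStrat (hD : 1 ≤ D) (hτ' : Stable D τ')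
    (hav : IsAvalancheFor D τ τ' s) {v c : ℕ} (hv : v < s.length)
    (hc : D ≤ applyStrat D (addGrain τ) (s.take v) c) : s.getD v 0 ≤ c := by
  by_contra hlt
  obtain ⟨hlegal, happ⟩ := hav.legal_drop v
  obtain ⟨l', hl', happ'⟩ := exists_legal_cons_of_stable hD hlegal hc (happ ▸ hτ')
  have hsplit : s = s.take v ++ s.getD v 0 :: s.drop (v + 1) := by
    rw [List.getD_eq_getElem s 0 hv, ← List.drop_eq_getElem_cons hv, List.take_append_drop]
  refine hav.2.2 (s.take v ++ c :: l') ?_ ?_ ?_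
  · exact (legal_append _ _ _).2 ⟨hav.legal_take v, hl'⟩
  · rw [applyStrat_append, happ', happ]
  · have hlex := List.Lex.append_left (· < ·)
      (List.Lex.rel (l₁ := l') (l₂ := s.drop (v + 1)) (not_le.1 hlt)) (s.take v)
    rwa [← hsplit] at hlex

theorem applyStrat_take_lt_of_lt_getD (hD : 1 ≤ D) (hτ' : Stable D τ')
    (hav : IsAvalancheFor D τ τ' s) {v c : ℕ} (hv : v < s.length) (hc : c < s.getD v 0) :
    applyStrat D (addGrain τ) (s.take v) c < D :=
  lt_of_not_ge fun h => absurd (hav.getD_le_of_le_applyStrat hD hτ' hv h) (not_le.2 hc)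

theorem getD_ne_of_applyStrat_lt (hav : IsAvalancheFor D τ τ' s) {u v c : ℕ}
    (hc : applyStrat D (addGrain τ) (s.take u) c < D) (huv : u ≤ v) (hv : v < s.length)
    (h : ∀ z, u ≤ z → z < v → c + 1 < s.getD z 0) : s.getD v 0 ≠ c := by
  intro hvc
  have := hav.le_applyStrat_getD hv
  rw [hvc, applyStrat_take_eq_of_lt huv h] at this
  omega

/-- Look at the first later firing at or left of `j`: a column left of `j` is untouched since
time `u`, and `j` itself can only have gathered the `D - 1` grains from `j + 1`. -/
theorem lt_getD_of_stuck (hD : 2 ≤ D) (hτ : Stable D τ) (hav : IsAvalancheFor D τ τ' s)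
    {u j : ℕ} (hj0 : j ≠ 0) (hτj : τ j = 0) (hsrc : ∀ x ∈ s.take u, x + D - 1 ≠ j)
    (hbelow : ∀ c < j, applyStrat D (addGrain τ) (s.take u) c < D) :
    ∀ v, u ≤ v → v < s.length → j < s.getD v 0 := by
  intro v
  induction v using Nat.strong_induction_on with
  | _ v ih =>
  intro huv hv
  have hgap : ∀ z, u ≤ z → z < v → j < s.getD z 0 := fun z h1 h2 => ih z h2 h1 (by omega)
  by_contra hle
  rcases (not_lt.1 hle).lt_or_eq with hlt | heq
  · exact hav.getD_ne_of_applyStrat_lt (hbelow _ hlt) huv hv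
      (fun z h1 h2 => by have := hgap z h1 h2; omega) rfl
  · have hsrc' : ∀ x ∈ s.take v, x + D - 1 ≠ j := by
      intro x hx
      obtain ⟨z, hzv, hzs, rfl⟩ := List.mem_take_iff_getD.1 hx
      rcases lt_or_ge z u with hzu | hzu
      · exact hsrc _ (List.mem_take_iff_getD.2 ⟨z, hzu, hzs, rfl⟩)
      · have := hgap z hzu hzv
        omega
    have hstuck := applyStrat_lt_of_forall_ne hD (hav.legal_take v)
      ((hav.nodup hD hτ).sublist (List.take_sublist _ _))
      (by rw [addGrain_of_ne τ hj0, hτj]) hsrc'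
    have := hav.le_applyStrat_getD hv
    rw [heq] at this
    omega

/-- The column fired at `u` can only have been made fireable by its source, which is at most
`p`. -/
theorem getD_le_add (hD : 2 ≤ D) (hτ : Stable D τ) (hav : IsAvalancheFor D τ τ' s) {u p : ℕ}
    (hu : u < s.length) (hpre : ∀ v < u, s.getD v 0 ≤ p) (hpq : p < s.getD u 0) :
    s.getD u 0 ≤ p + D - 1 := by
  have hle := List.forall_mem_take_le hpre
  obtain ⟨x, hx, hxq⟩ := exists_source_of_le_applyStrat hD (hav.legal_take u)
    (by rw [addGrain_of_ne τ (by omega)]; exact hτ _)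
    (fun h => absurd (hle _ h) (by omega)) (fun h => absurd (hle _ h) (by omega))
    (hav.le_applyStrat_getD hu)
  have := hle x hx
  omega

variable {l : ℕ}

/-- Otherwise, by `lt_getD_of_stuck`, neither `j` nor its source `j + 1 - D` ever fires,
although one of them lies in `[l, p]` or in `[l, l + D - 2]`, where every column fires. -/
theorem pos_or_exists_source (hD : 2 ≤ D) (hτ : Stable D τ) (hτ' : Stable D τ')
    (hav : IsAvalancheFor D τ τ' s) (hl : ∀ i, l ≤ i → i < l + D - 1 → i ∈ s)
    {u p : ℕ} (hfill : ∀ c, l ≤ c → c ≤ p → c ∈ s) (hu : u < s.length)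
    (hpre : ∀ v < u, s.getD v 0 ≤ p) (hlp : l ≤ p) (hqp : s.getD u 0 ≤ p + D - 1)
    {j : ℕ} (hpj : p < j) (hjq : j < s.getD u 0) :
    0 < τ j ∨ ∃ x ∈ s.take u, x + D - 1 = j := by
  by_contra! h
  obtain ⟨hτj, hsrc⟩ := h
  have hafter := hav.lt_getD_of_stuck hD hτ (by omega) (by omega) hsrc
    (fun c hc => hav.applyStrat_take_lt_of_lt_getD (by omega) hτ' hu (by omega))
  rcases lt_or_ge j (l + D - 1) with hjw | hjw
  · obtain ⟨z, hz, hzj⟩ := List.mem_iff_getD.1 (hl j (by omega) hjw)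
    rcases lt_or_ge z u with hzu | hzu
    · have := hpre z hzu
      omega
    · have := hafter z hzu hz
      omega
  · obtain ⟨z, hz, hzc⟩ := List.mem_iff_getD.1 (hfill (j + 1 - D) (by omega) (by omega))
    rcases lt_or_ge z u with hzu | hzu
    · exact hsrc _ (List.mem_take_iff_getD.2 ⟨z, hzu, hz, hzc⟩) (by omega)
    · have := hafter z hzu hz
      omega

/-- With `q = s.getD u 0`: once `q - m` has fired, `q - m - 1` holds its `D - 1` grains plus one
more by `pos_or_exists_source`, and nothing left of it is fireable, so it fires next. -/
theorem getD_add_eq_sub (hD : 2 ≤ D) (hτ : Stable D τ) (hτ' : Stable D τ')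
    (hav : IsAvalancheFor D τ τ' s) (hl : ∀ i, l ≤ i → i < l + D - 1 → i ∈ s)
    {u p : ℕ} (hfill : ∀ c, l ≤ c → c ≤ p → c ∈ s) (hu : u < s.length)
    (hpre : ∀ v < u, s.getD v 0 ≤ p) (hpq : p < s.getD u 0) (hq : l + D - 1 ≤ s.getD u 0) :
    ∀ m, p + m < s.getD u 0 → u + m < s.length ∧ s.getD (u + m) 0 = s.getD u 0 - m := by
  set q := s.getD u 0
  have hqp := hav.getD_le_add hD hτ hu hpre hpq
  intro m
  induction m using Nat.strong_induction_on with
  | _ m ih =>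
  intro hm
  rcases m with _ | m
  · exact ⟨hu, rfl⟩
  have hrun : ∀ z, u ≤ z → z ≤ u + m → z < s.length ∧ s.getD z 0 = q - (z - u) := by
    intro z h1 h2
    have := ih (z - u) (by omega) (by omega)
    rwa [show u + (z - u) = z by omega] at this
  set j := q - (m + 1)
  have hj : j ∉ s.take (u + m + 1) := by
    rw [List.mem_take_iff_getD]
    rintro ⟨z, hz, -, hzj⟩
    rcases lt_or_ge z u with hzu | hzu
    · have := hpre z hzu
      omega
    · have := (hrun z hzu (by omega)).2
      omega
  have hj1 : j + 1 ∈ s.take (u + m + 1) := by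
    obtain ⟨hlen, hval⟩ := hrun (u + m) (by omega) le_rfl
    exact List.mem_take_iff_getD.2 ⟨u + m, by omega, hlen, by omega⟩
  have hfire : D ≤ applyStrat D (addGrain τ) (s.take (u + m + 1)) j := by
    refine le_applyStrat_of_succ_mem hD (hav.legal_take _) hj hj1 ?_
    rcases hav.pos_or_exists_source hD hτ hτ' hl hfill hu hpre (by omega) hqp
      (j := j) (by omega) (by omega) with hpos | ⟨x, hx, hxj⟩
    · left
      rwa [addGrain_of_ne τ (by omega)]
    · exact Or.inr ⟨x, List.take_subset_take_left _ (by omega) hx, hxj⟩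
  have hlen := hav.lt_length_of_le_applyStrat hτ' hfire
  have hle := hav.getD_le_of_le_applyStrat (by omega) hτ' hlen hfire
  rw [← Nat.add_assoc]
  refine ⟨hlen, le_antisymm hle (not_lt.1 fun hlt => ?_)⟩
  exact hav.getD_ne_of_applyStrat_lt
    (hav.applyStrat_take_lt_of_lt_getD (by omega) hτ' hu (c := s.getD (u + m + 1) 0) (by omega))
    (by omega) hlen (fun z h1 h2 => by have := (hrun z h1 (by omega)).2; omega) rfl

theorem mem_of_le_getD_of_isPeak (hD : 2 ≤ D) (hτ : Stable D τ) (hτ' : Stable D τ')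
    (hav : IsAvalancheFor D τ τ' s) (hl : ∀ i, l ≤ i → i < l + D - 1 → i ∈ s) :
    ∀ u, IsPeak s u → ∀ c, l ≤ c → c ≤ s.getD u 0 → c ∈ s := by
  intro u
  induction u using Nat.strong_induction_on with
  | _ u ih =>
  intro hpk c hlc hcu
  rcases lt_or_ge (s.getD u 0) (l + D - 1) with hsmall | hbig
  · exact hl c hlc (by omega)
  have hu0 : 0 < u := Nat.pos_of_ne_zero fun h => by
    subst h
    rw [hav.getD_zero hτ hpk.1] at hbig
    omega
  obtain ⟨ta, htu, hta, hnext⟩ := exists_last_isPeak_lt hu0 hpk.1.le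
  rcases le_or_gt c (s.getD ta 0) with hc | hc
  · exact ih ta htu hta c hlc hc
  obtain ⟨hlen, heq⟩ := hav.getD_add_eq_sub hD hτ hτ' hl (ih ta htu hta) hpk.1
    (hta.getD_le_of_forall_not_isPeak hpk.1.le hnext) (hpk.2 ta htu) hbig
    (s.getD u 0 - c) (by omega)
  rw [show c = s.getD u 0 - (s.getD u 0 - c) by omega, ← heq]
  exact List.getD_mem_of_lt hlen

end IsAvalancheFor

end

theorem after_peak_decreasing_general (D k l : ℕ) (hD : 2 ≤ D)
    (s : List ℕ) (τ τ' : ℕ → ℕ) (hτ : IsPi D (k - 1) τ) (hτ' : IsPi D k τ')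
    (hav : IsAvalancheFor D τ τ' s)
    (hl : ∀ i : ℕ, l ≤ i → i < l + D - 1 → i ∈ s)
    (t t0 pi pim : ℕ) (hpeak : IsPeak s t) (hpi : s.getD t 0 = pi)
    (hpige : l + D - 1 ≤ pi)
    (ht0 : t0 < t) (hpeak0 : IsPeak s t0) (hpim : s.getD t0 0 = pim)
    (hprev : ∀ u : ℕ, t0 < u → u < t → ¬ IsPeak s u) :
    t + (pi - pim) ≤ s.length ∧
      ∀ u : ℕ, t < u → u ≤ t + (pi - pim) - 1 →
        s.getD u 0 = s.getD (u - 1) 0 - 1 := by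
  subst hpi hpim
  have hlt := hpeak.2 t0 ht0
  have hdesc := hav.getD_add_eq_sub hD hτ.2 hτ'.2 hl
    (hav.mem_of_le_getD_of_isPeak hD hτ.2 hτ'.2 hl t0 hpeak0) hpeak.1
    (hpeak0.getD_le_of_forall_not_isPeak hpeak.1.le hprev) hlt hpige
  refine ⟨?_, fun u hu1 hu2 => ?_⟩
  · have := (hdesc (s.getD t 0 - s.getD t0 0 - 1) (by omega)).1
    omega
  · have h1 := (hdesc (u - t) (by omega)).2
    have h2 := (hdesc (u - 1 - t) (by omega)).2
    rw [show t + (u - t) = u by omega] at h1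
    rw [show t + (u - 1 - t) = u - 1 by omega] at h2
    omega

/-- After a peak p_i = s_t with p_i ≥ l + D - 1, the avalanche lasts at least
p_i - p_{i-1} - 1 further steps, which fire consecutively decreasing columns. -/
theorem after_peak_decreasing (D k l : ℕ) (hD : 2 ≤ D) (hk : 1 ≤ k)
    (s : List ℕ) (τ τ' : ℕ → ℕ) (hτ : IsPi D (k - 1) τ) (hτ' : IsPi D k τ')
    (hav : IsAvalancheFor D τ τ' s)
    (hl : ∀ i : ℕ, l ≤ i → i < l + D - 1 → i ∈ s)
    (t t0 pi pim : ℕ) (hpeak : IsPeak s t) (hpi : s.getD t 0 = pi)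
    (hpige : l + D - 1 ≤ pi)
    (ht0 : t0 < t) (hpeak0 : IsPeak s t0) (hpim : s.getD t0 0 = pim)
    (hprev : ∀ u : ℕ, t0 < u → u < t → ¬ IsPeak s u) :
    t + (pi - pim) ≤ s.length ∧
      ∀ u : ℕ, t < u → u ≤ t + (pi - pim) - 1 →
        s.getD u 0 = s.getD (u - 1) 0 - 1 :=
  after_peak_decreasing_general D k l hD s τ τ' hτ hτ' hav hl t t0 pi pim hpeak hpi hpige ht0 hpeak0
    hpim hprev
end

section
/- There exist constants A' > 0 and B such that for all N and j: if the stable configuration π(N) of KSPM(3) has prefix (2,0)^j (i.e. π(N)_{2i} = 2 and π(N)_{2i+1} = 0 for 0 ≤ i ≤ j−1), then N > A'·4^j + B. -/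
/-! The shot vector `a` satisfies `π(N)ₖ + 3aₖ = 2aₖ₊₁ + aₖ₋₂` with `a₋₂ = N`, `a₋₁ = 0`. On each
`(2,0)` block of the prefix, the coordinate of `(a_{2i-2}, a_{2i-1}, a_{2i})` along the
`-1/2`-eigenline of the transfer matrix moves towards the fixed point `-2/3` by a factor `4`.
Its (scaled) distance to the fixed point is a positive integer, so it started at least `4^j`
away; but at the start that distance is `3(N + a₀) + 2`, and `a₀ ≤ N/2` because every firing
of column `0` loses two grains. -/

open Finset

section Conservation

variable {D : ℕ}

lemma cast_step (hD : 2 ≤ D) {σ : ℕ → ℕ} {i : ℕ} (hi : D ≤ σ i) (j : ℕ) :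
    (step D σ i j : ℤ) = σ j - D * (if j = i then 1 else 0)
      + (D - 1) * (if j + 1 = i then 1 else 0) + (if j = i + D - 1 then 1 else 0) := by
  unfold step
  split_ifs <;> subst_vars <;> omega

lemma applyStrat_add_mul_count_s16 (hD : 2 ≤ D) (s : List ℕ) {σ : ℕ → ℕ} (hs : Legal D σ s)
    (j : ℕ) :
    (applyStrat D σ s j : ℤ) + D * s.count j
      = σ j + (D - 1) * s.count (j + 1)
        + (if D - 1 ≤ j then (s.count (j - (D - 1)) : ℤ) else 0) := by
  induction s generalizing σ with
  | nil => simp [applyStrat]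
  | cons i t ih =>
    obtain ⟨hi, ht⟩ := hs
    have h := ih ht
    rw [cast_step hD hi] at h
    simp only [applyStrat, List.count_cons, beq_iff_eq]
    push_cast
    split_ifs at h ⊢ <;> first | linear_combination h | omega

lemma sum_step_add (hD : 2 ≤ D) {σ : ℕ → ℕ} {i M : ℕ} (hi : D ≤ σ i) (hM : i + D ≤ M) :
    ∑ j ∈ range M, (step D σ i j : ℤ) + (if i = 0 then (D - 1 : ℤ) else 0)
      = ∑ j ∈ range M, (σ j : ℤ) := by
  have hpred : ∑ j ∈ range M, (if j + 1 = i then (1 : ℤ) else 0) = if i = 0 then 0 else 1 := by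
    rcases i with _ | i
    · simp
    · simp [show i < M by omega]
  simp only [cast_step hD hi, sum_add_distrib, sum_sub_distrib, ← mul_sum, sum_ite_eq',
    mem_range, hpred]
  split_ifs <;> omega

lemma sum_applyStrat_add_mul_count_zero (hD : 2 ≤ D) (s : List ℕ) {σ : ℕ → ℕ}
    (hs : Legal D σ s) {M : ℕ} (hM : ∀ x ∈ s, x + D ≤ M) :
    ∑ j ∈ range M, (applyStrat D σ s j : ℤ) + (D - 1) * s.count 0
      = ∑ j ∈ range M, (σ j : ℤ) := by
  induction s generalizing σ with
  | nil => simp [applyStrat]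
  | cons i t ih =>
    obtain ⟨hi, ht⟩ := hs
    have h := ih ht fun x hx => hM x (List.mem_cons_of_mem i hx)
    have hstep := sum_step_add hD hi (hM i List.mem_cons_self)
    simp only [applyStrat, List.count_cons, beq_iff_eq]
    push_cast
    split_ifs at hstep ⊢ <;> linarith

lemma mul_count_zero_le (hD : 2 ≤ D) {N : ℕ} {s : List ℕ} (hs : Legal D (initConf N) s) :
    (D - 1) * (s.count 0 : ℤ) ≤ N := by
  have h := sum_applyStrat_add_mul_count_zero hD s hs (M := s.sum + D)
    fun x hx => by have := List.le_sum_of_mem hx; omega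
  have hinit : ∑ j ∈ range (s.sum + D), (initConf N j : ℤ) = N := by
    simp [initConf, sum_ite_eq', show 0 < s.sum + D by omega]
  have hnonneg : 0 ≤ ∑ j ∈ range (s.sum + D), (applyStrat D (initConf N) s j : ℤ) :=
    sum_nonneg fun _ _ => by positivity
  linarith

/-- The paper's shot vector `(a_{-(D-1)}, …, a_{-1}, a_0, a_1, …) = (N, 0, …, 0, a_0, a_1, …)`,
reindexed from `0`. -/
def extShot (D N : ℕ) (s : List ℕ) (n : ℕ) : ℤ :=
  if D - 1 ≤ n then s.count (n - (D - 1)) else if n = 0 then N else 0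

lemma extShot_recurrence (hD : 2 ≤ D) {N : ℕ} {s : List ℕ} {τ : ℕ → ℕ}
    (hs : Legal D (initConf N) s) (hτ : applyStrat D (initConf N) s = τ) (k : ℕ) :
    (τ k : ℤ) + D * extShot D N s (k + (D - 1))
      = (D - 1) * extShot D N s (k + D) + extShot D N s k := by
  have h := applyStrat_add_mul_count_s16 hD s hs k
  rw [hτ] at h
  simp only [extShot, initConf, Nat.add_sub_cancel, if_pos (Nat.le_add_left _ _),
    show k + D - (D - 1) = k + 1 by omega, if_pos (show D - 1 ≤ k + D by omega)] at h ⊢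
  split_ifs at h ⊢ <;> omega

end Conservation

section PeriodicPrefix

/-- `3ℓ(u) + 2` for `u = (e (2i), e (2i+1), e (2i+2))`, where `ℓ(u) = u₀ - 2u₁ + u₂` is the
left eigenvector of the transfer matrix for `-1/2`: a `(2,0)` block acts on `ℓ` by
`ℓ ↦ ℓ/4 - 1/2`, whose fixed point is `-2/3`. -/
def eigenDefect (e : ℕ → ℤ) (i : ℕ) : ℤ :=
  3 * (e (2 * i) - 2 * e (2 * i + 1) + e (2 * i + 2)) + 2

variable {e : ℕ → ℤ} {τ : ℕ → ℕ}

lemma four_mul_eigenDefect_succ (hrec : ∀ k, (τ k : ℤ) + 3 * e (k + 2) = 2 * e (k + 3) + e k)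
    {i : ℕ} (h₀ : τ (2 * i) = 2) (h₁ : τ (2 * i + 1) = 0) :
    4 * eigenDefect e (i + 1) = eigenDefect e i := by
  have r₀ := hrec (2 * i)
  have r₁ := hrec (2 * i + 1)
  rw [h₀] at r₀
  rw [h₁] at r₁
  simp only [eigenDefect, show 2 * (i + 1) = 2 * i + 2 by ring] at r₀ r₁ ⊢
  push_cast at r₀ r₁
  linarith

lemma pow_four_mul_eigenDefect (hrec : ∀ k, (τ k : ℤ) + 3 * e (k + 2) = 2 * e (k + 3) + e k)
    {j : ℕ} (hpref : ∀ i < j, τ (2 * i) = 2 ∧ τ (2 * i + 1) = 0) :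
    4 ^ j * eigenDefect e j = eigenDefect e 0 := by
  induction j with
  | zero => simp
  | succ j ih =>
    obtain ⟨h₀, h₁⟩ := hpref j j.lt_succ_self
    rw [pow_succ, mul_assoc, four_mul_eigenDefect_succ hrec h₀ h₁]
    exact ih fun i hi => hpref i (hi.trans j.lt_succ_self)

lemma pow_four_le_eigenDefect_zero
    (hrec : ∀ k, (τ k : ℤ) + 3 * e (k + 2) = 2 * e (k + 3) + e k)
    {j : ℕ} (hpref : ∀ i < j, τ (2 * i) = 2 ∧ τ (2 * i + 1) = 0) (hpos : 0 < eigenDefect e 0) :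
    4 ^ j ≤ eigenDefect e 0 := by
  have h := pow_four_mul_eigenDefect hrec hpref
  have hj : 0 < eigenDefect e j := pos_of_mul_pos_right (h ▸ hpos) (by positivity)
  calc (4 : ℤ) ^ j = 4 ^ j * 1 := (mul_one _).symm
    _ ≤ 4 ^ j * eigenDefect e j := by gcongr; omega -- discreteness: `eigenDefect e j ∈ ℤ`
    _ = eigenDefect e 0 := h

end PeriodicPrefix

/-- There are constants A' > 0 and B such that whenever π(N) in KSPM(3) has prefix
(2,0)^j, one has N > A'·4^j + B. -/
theorem prefix_forces_many_grains :
    ∃ A' B : ℝ, 0 < A' ∧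
      ∀ (N j : ℕ) (τ : ℕ → ℕ), IsPi 3 N τ →
        (∀ i : ℕ, i < j → τ (2 * i) = 2 ∧ τ (2 * i + 1) = 0) →
        A' * 4 ^ j + B < (N : ℝ) := by
  refine ⟨2 / 9, -1, by norm_num, fun N j τ hπ hpref => ?_⟩
  obtain ⟨⟨s, hs, hτ⟩, -⟩ := hπ
  have hrec : ∀ k, (τ k : ℤ) + 3 * extShot 3 N s (k + 2)
      = 2 * extShot 3 N s (k + 3) + extShot 3 N s k := fun k => by
    simpa using extShot_recurrence (by norm_num) hs hτ k
  have hdefect : eigenDefect (extShot 3 N s) 0 = 3 * (N + s.count 0) + 2 := by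
    simp [eigenDefect, extShot]
  have hpow := pow_four_le_eigenDefect_zero hrec hpref (by rw [hdefect]; positivity)
  have hcount := mul_count_zero_le (by norm_num) hs
  rw [hdefect] at hpow
  have hbound : (2 : ℝ) * 4 ^ j ≤ 9 * N + 4 := by
    have : 2 * (4 : ℤ) ^ j ≤ 9 * N + 4 := by push_cast at hcount; linarith
    exact_mod_cast this
  linarith
end
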